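/- Let A_1 → A_2 → A_3 → 0 be an exact sequence of abelian groups and let ℓ be a prime. If the ℓ-torsion subgroup of A_3 is finite, then the induced sequence of ℓ-adic completions A_1^{(ℓ)} → A_2^{(ℓ)} → A_3^{(ℓ)} → 0 is exact. -/

import Mathlib

set_option maxHeartbeats 1000000

/-!
Abstract framework for the arithmetic duality / weak approximation statements of
"Obstructions to weak approximation for reductive groups over p-adic function fields".

Objects which are not available in Mathlib (étale hypercohomology of complexes of
tori, completions of a function field at closed points of a curve, ...) are taken
as abstract data; the groups occurring in the statements are modelled by abstract
abelian (or topological) groups, and the canonical maps between them by abstract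
homomorphisms, as documented in the docstrings.
-/

/-- The group `ℚ/ℤ`, realised as `ℚ` modulo the subgroup generated by `1`. -/
abbrev QZ : Type := AddCircle (1 : ℚ)

/-- The dual `A^D = Hom(A, ℚ/ℤ)` of an abelian group `A`; for a discrete torsion
group (the case in which this is used) this coincides with the group of
*continuous* homomorphisms to `ℚ/ℤ`. -/
abbrev qzDual (A : Type) [AddCommGroup A] : Type := A →+ QZ

/-- A bilinear pairing `A × B → ℚ/ℤ` is perfect if both induced adjoint maps
`A → Hom(B, ℚ/ℤ)` and `B → Hom(A, ℚ/ℤ)` are bijective. -/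
def IsPerfectPairing {A B : Type} [AddCommGroup A] [AddCommGroup B]
    (f : A →+ B →+ QZ) : Prop :=
  Function.Bijective (fun a : A => f a) ∧ Function.Bijective (fun b : B => f.flip b)

/-- The left kernel of the pairing `f` is a divisible group. -/
def LeftKernelDivisible {A B : Type} [AddCommGroup A] [AddCommGroup B]
    (f : A →+ B →+ QZ) : Prop :=
  ∀ a : A, f a = 0 → ∀ n : ℕ, 0 < n → ∃ a' : A, f a' = 0 ∧ n • a' = a

/-- The subgroup `m•A` of an abelian group `A`. -/
def zsmulRange (m : ℤ) (A : Type) [AddCommGroup A] : AddSubgroup A where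
  carrier := { x | ∃ a : A, m • a = x }
  zero_mem' := ⟨0, smul_zero m⟩
  add_mem' := by
    rintro x y ⟨a, rfl⟩ ⟨b, rfl⟩
    exact ⟨a + b, smul_add m a b⟩
  neg_mem' := by
    rintro x ⟨a, rfl⟩
    exact ⟨-a, smul_neg m a⟩

lemma mem_zsmulRange {m : ℤ} {A : Type} [AddCommGroup A] {x : A} :
    x ∈ zsmulRange m A ↔ ∃ a : A, m • a = x := Iff.rfl

/-- The `m`-torsion subgroup `_m A` of an abelian group `A`. -/
def torsionBy (m : ℤ) (A : Type) [AddCommGroup A] : AddSubgroup A where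
  carrier := { x | m • x = 0 }
  zero_mem' := smul_zero m
  add_mem' := by
    intro x y hx hy
    simp only [Set.mem_setOf_eq, smul_add] at *
    rw [hx, hy, add_zero]
  neg_mem' := by
    intro x hx
    simp only [Set.mem_setOf_eq, smul_neg] at *
    rw [hx, neg_zero]

lemma mem_torsionBy {m : ℤ} {A : Type} [AddCommGroup A] {x : A} :
    x ∈ torsionBy m A ↔ m • x = 0 := Iff.rfl

/-- The `ℓ`-primary torsion subgroup `A{ℓ}` of an abelian group `A`. -/
def lPrimary (ℓ : ℕ) (A : Type) [AddCommGroup A] : AddSubgroup A where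
  carrier := { a | ∃ n : ℕ, ((ℓ : ℤ) ^ n) • a = 0 }
  zero_mem' := ⟨0, smul_zero _⟩
  add_mem' := by
    rintro a b ⟨m, hm⟩ ⟨n, hn⟩
    refine ⟨m + n, ?_⟩
    have ha : ((ℓ : ℤ) ^ (m + n)) • a = 0 := by
      rw [pow_add, mul_comm, mul_smul, hm, smul_zero]
    have hb : ((ℓ : ℤ) ^ (m + n)) • b = 0 := by
      rw [pow_add, mul_smul, hn, smul_zero]
    rw [smul_add, ha, hb, add_zero]
  neg_mem' := by
    rintro a ⟨n, hn⟩
    exact ⟨n, by rw [smul_neg, hn, neg_zero]⟩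

/-- The quotient `A/mA`. -/
abbrev ModM (m : ℤ) (A : Type) [AddCommGroup A] : Type := A ⧸ zsmulRange m A

lemma zsmulRange_pow_succ_le (ℓ : ℕ) (n : ℕ) (A : Type) [AddCommGroup A] :
    zsmulRange ((ℓ : ℤ) ^ (n + 1)) A ≤ zsmulRange ((ℓ : ℤ) ^ n) A := by
  intro x hx
  rcases mem_zsmulRange.1 hx with ⟨a, rfl⟩
  exact mem_zsmulRange.2 ⟨(ℓ : ℤ) • a, by rw [← mul_smul, ← pow_succ]⟩

/-- Transition map `A/ℓ^{n+1}A → A/ℓ^nA`. -/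
def modTrans (ℓ : ℕ) (n : ℕ) (A : Type) [AddCommGroup A] :
    ModM ((ℓ : ℤ) ^ (n + 1)) A →+ ModM ((ℓ : ℤ) ^ n) A :=
  QuotientAddGroup.map _ _ (AddMonoidHom.id A)
    (fun x hx => AddSubgroup.mem_comap.2 (zsmulRange_pow_succ_le ℓ n A hx))

/-- The `ℓ`-adic completion `A^{(ℓ)} = lim_n A/ℓ^n A`, realised as the subgroup of
compatible families in `∏_n A/ℓ^n A`. -/
def lAdicCarrier (ℓ : ℕ) (A : Type) [AddCommGroup A] :
    AddSubgroup (∀ n : ℕ, ModM ((ℓ : ℤ) ^ n) A) where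
  carrier := { f | ∀ n, modTrans ℓ n A (f (n + 1)) = f n }
  zero_mem' := fun n => by simp
  add_mem' := by
    intro f g hf hg n
    simp only [Pi.add_apply, map_add, hf n, hg n]
  neg_mem' := by
    intro f hf n
    simp only [Pi.neg_apply, map_neg, hf n]

/-- The `ℓ`-adic completion `A^{(ℓ)}` of an abelian group `A`. -/
abbrev LAdic (ℓ : ℕ) (A : Type) [AddCommGroup A] : Type := ↥(lAdicCarrier ℓ A)


@[simp] lemma modTrans_mk (ℓ n : ℕ) (A : Type) [AddCommGroup A] (a : A) :
    modTrans ℓ n A (QuotientAddGroup.mk a) = QuotientAddGroup.mk a :=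
  QuotientAddGroup.map_mk _ _ _ _ a

/-- The canonical map `A → A^{(ℓ)}`. -/
def toLAdic (ℓ : ℕ) (A : Type) [AddCommGroup A] : A →+ LAdic ℓ A where
  toFun a := ⟨fun _ => QuotientAddGroup.mk a, fun n => modTrans_mk ℓ n A a⟩
  map_zero' := Subtype.ext <| funext fun _ => QuotientAddGroup.mk_zero _
  map_add' a b := Subtype.ext <| funext fun _ => QuotientAddGroup.mk_add _ a b

lemma zsmulRange_le_comap (m : ℤ) {A B : Type} [AddCommGroup A] [AddCommGroup B]
    (f : A →+ B) : zsmulRange m A ≤ (zsmulRange m B).comap f := by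
  intro x hx
  rcases mem_zsmulRange.1 hx with ⟨a, rfl⟩
  exact AddSubgroup.mem_comap.2 (mem_zsmulRange.2 ⟨f a, by rw [← map_zsmul]⟩)

/-- The map `A/mA → B/mB` induced by `f : A → B`. -/
def modMap (m : ℤ) {A B : Type} [AddCommGroup A] [AddCommGroup B] (f : A →+ B) :
    ModM m A →+ ModM m B :=
  QuotientAddGroup.map _ _ f (zsmulRange_le_comap m f)

@[simp] lemma modMap_mk (m : ℤ) {A B : Type} [AddCommGroup A] [AddCommGroup B]
    (f : A →+ B) (a : A) :
    modMap m f (QuotientAddGroup.mk a) = QuotientAddGroup.mk (f a) :=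
  QuotientAddGroup.map_mk _ _ _ _ a

/-- The map `A^{(ℓ)} → B^{(ℓ)}` induced functorially by `f : A → B`. -/
def LAdicMap (ℓ : ℕ) {A B : Type} [AddCommGroup A] [AddCommGroup B] (f : A →+ B) :
    LAdic ℓ A →+ LAdic ℓ B where
  toFun x := ⟨fun n => modMap ((ℓ : ℤ) ^ n) f (x.1 n), by
    intro n
    have h1 : ∀ c : ModM ((ℓ : ℤ) ^ (n + 1)) A,
        modTrans ℓ n B (modMap ((ℓ : ℤ) ^ (n + 1)) f c)
          = modMap ((ℓ : ℤ) ^ n) f (modTrans ℓ n A c) := by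
      intro c
      refine QuotientAddGroup.induction_on c fun a => ?_
      rw [modMap_mk, modTrans_mk, modTrans_mk, modMap_mk]
    rw [h1, x.2 n]⟩
  map_zero' := Subtype.ext <| funext fun n => by
    show modMap ((ℓ : ℤ) ^ n) f ((0 : LAdic ℓ A).1 n) = 0
    simp only [ZeroMemClass.coe_zero, Pi.zero_apply, map_zero]
  map_add' x y := Subtype.ext <| funext fun n => by
    show modMap ((ℓ : ℤ) ^ n) f ((x + y).1 n) = (_ + _ : LAdic ℓ B).1 n
    simp only [AddSubgroup.coe_add, Pi.add_apply, map_add]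
/-- The profinite completion `A^∧ = lim_{H of finite index} A/H`, realised as the
subgroup of compatible families. -/
def profiniteCarrier (A : Type) [AddCommGroup A] :
    AddSubgroup (∀ H : {H : AddSubgroup A // H.FiniteIndex}, A ⧸ H.1) where
  carrier := { f | ∀ (H H' : {H : AddSubgroup A // H.FiniteIndex}) (h : H.1 ≤ H'.1),
      QuotientAddGroup.map H.1 H'.1 (AddMonoidHom.id A)
        (fun x hx => AddSubgroup.mem_comap.2 (h hx)) (f H) = f H' }
  zero_mem' := fun H H' h => by simp
  add_mem' := by
    intro f g hf hg H H' h
    simp only [Pi.add_apply, map_add, hf H H' h, hg H H' h]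
  neg_mem' := by
    intro f hf H H' h
    simp only [Pi.neg_apply, map_neg, hf H H' h]

/-- The profinite completion `A^∧` of an abelian group `A`. -/
abbrev ProfiniteCompletion (A : Type) [AddCommGroup A] : Type := ↥(profiniteCarrier A)

/-- The canonical map `A → A^∧`. -/
def toProfiniteCompletion (A : Type) [AddCommGroup A] : A →+ ProfiniteCompletion A where
  toFun a := ⟨fun _ => QuotientAddGroup.mk a, fun H H' h => by
    simp [QuotientAddGroup.map_mk]⟩
  map_zero' := by apply Subtype.ext; funext H; simp
  map_add' a b := by apply Subtype.ext; funext H; rfl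

/-- Given local restriction maps `loc v : H → H_v`, the subgroup of classes that are
locally trivial outside the finite set `S` (the group `Ш_S`). -/
def shaOutside {H : Type} [AddCommGroup H] {V : Type} {Hv : V → Type}
    [∀ v, AddCommGroup (Hv v)] (loc : ∀ v, H →+ Hv v) (S : Finset V) : AddSubgroup H :=
  ⨅ (v : V) (_ : v ∉ S), AddMonoidHom.ker (loc v)

/-- The Tate–Shafarevich group `Ш`: classes that are locally trivial everywhere. -/
def sha {H : Type} [AddCommGroup H] {V : Type} {Hv : V → Type}
    [∀ v, AddCommGroup (Hv v)] (loc : ∀ v, H →+ Hv v) : AddSubgroup H :=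
  ⨅ v : V, AddMonoidHom.ker (loc v)

/-- The group `Ш_ω`: classes that are locally trivial at all but finitely many places. -/
def shaOmega {H : Type} [AddCommGroup H] {V : Type} {Hv : V → Type}
    [∀ v, AddCommGroup (Hv v)] (loc : ∀ v, H →+ Hv v) : AddSubgroup H :=
  ⨆ S : Finset V, shaOutside loc S

/-!
Completing a surjection `g` gives a surjection: over a compatible family `(yₙ)`, the transition maps
between the fibres of `A₂/ℓⁿ → A₃/ℓⁿ` are surjective. For exactness in the middle, replace `A₁` by
its image `B = ker g`, onto which it surjects. Over an element of the kernel of the completed map,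
the fibres of `B/ℓⁿB → A₂/ℓⁿA₂` are nonempty, and finite because the kernel `(B ∩ ℓⁿA₂)/ℓⁿB`
embeds into the finite group `A₃[ℓⁿ]` via `ℓⁿa ↦ g a`. König's lemma then yields a compatible
family of points in these fibres, that is, a preimage in `B^{(ℓ)}`.
-/

open Function

section InverseSequence

variable {F : ℕ → Type*} (t : ∀ n, F (n + 1) → F n)

theorem exists_compatible_seq_of_surjective (ht : ∀ n, Surjective (t n)) (x : F 0) :
    ∃ s : ∀ n, F n, ∀ n, t n (s (n + 1)) = s n := by
  choose u hu using ht
  exact ⟨fun n => Nat.rec x (fun n y => u n y) n, fun n => hu n _⟩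

open CategoryTheory in
theorem exists_compatible_seq_of_finite [∀ n, Finite (F n)] [∀ n, Nonempty (F n)] :
    ∃ s : ∀ n, F n, ∀ n, t n (s (n + 1)) = s n := by
  let G : ℕᵒᵖ ⥤ Type _ := Functor.ofOpSequence fun n => TypeCat.ofHom (t n)
  have : ∀ j, Finite (G.obj j) := fun j => inferInstanceAs (Finite (F j.unop))
  have : ∀ j, Nonempty (G.obj j) := fun j => inferInstanceAs (Nonempty (F j.unop))
  obtain ⟨s, hs⟩ := nonempty_sections_of_finite_inverse_system G
  refine ⟨fun n => s (Opposite.op n), fun n => ?_⟩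
  have := hs (homOfLE (Nat.le_add_right n 1)).op
  rwa [Functor.ofOpSequence_map_homOfLE_succ] at this

end InverseSequence

theorem AddMonoidHom.finite_fiber {G H : Type*} [AddGroup G] [AddGroup H] (φ : G →+ H)
    [Finite φ.ker] (y : H) : Finite {x // φ x = y} := by
  rcases isEmpty_or_nonempty {x // φ x = y} with h | ⟨x₀, hx₀⟩
  · infer_instance
  refine Finite.of_injective (fun x => (⟨x.1 - x₀, by simp [x.2, hx₀]⟩ : φ.ker)) ?_
  intro x x' h
  exact Subtype.ext (sub_left_injective (congrArg Subtype.val h))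

section Torsion

variable {A : Type} [AddCommGroup A]

theorem finite_torsionBy_mul {m k : ℤ} (hm : Finite (torsionBy m A))
    (hk : Finite (torsionBy k A)) : Finite (torsionBy (m * k) A) := by
  let φ : torsionBy (m * k) A →+ torsionBy m A :=
    ((zsmulAddGroupHom k).domRestrict (torsionBy (m * k) A)).codRestrict (torsionBy m A)
      fun x => by
        rw [AddMonoidHom.domRestrict_apply, zsmulAddGroupHom_apply, mem_torsionBy, smul_smul]
        exact x.2
  have : Finite φ.ker := Finite.of_injective
    (fun x => (⟨x.1.1, congrArg Subtype.val x.2⟩ : torsionBy k A))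
    fun x x' h => by have := congrArg Subtype.val h; ext; exact this
  exact (AddMonoidHom.finite_iff_finite_ker_range φ).2 ⟨this, inferInstance⟩

theorem finite_torsionBy_pow {m : ℤ} (hm : Finite (torsionBy m A)) (n : ℕ) :
    Finite (torsionBy (m ^ n) A) := by
  induction n with
  | zero =>
    have : Subsingleton (torsionBy (m ^ 0) A) := ⟨fun x y => Subtype.ext <| by
      rw [← one_smul ℤ x.1, ← one_smul ℤ y.1, ← pow_zero m, x.2, y.2]⟩
    infer_instance
  | succ n ih => exact pow_succ' m n ▸ finite_torsionBy_mul hm ih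

end Torsion

section ModM

variable {A B C : Type} [AddCommGroup A] [AddCommGroup B] [AddCommGroup C]

theorem modMap_comp (m : ℤ) (f : A →+ B) (g : B →+ C) (x : ModM m A) :
    modMap m (g.comp f) x = modMap m g (modMap m f x) :=
  QuotientAddGroup.induction_on x fun _ => rfl

theorem modMap_modTrans (ℓ n : ℕ) (f : A →+ B) (x : ModM ((ℓ : ℤ) ^ (n + 1)) A) :
    modMap ((ℓ : ℤ) ^ n) f (modTrans ℓ n A x) = modTrans ℓ n B (modMap _ f x) :=
  QuotientAddGroup.induction_on x fun _ => rfl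

theorem exists_mk_eq_of_modMap_eq_zero {m : ℤ} {g : B →+ C} (hg : Surjective g)
    {x : ModM m B} (hx : modMap m g x = 0) :
    ∃ b, g b = 0 ∧ (QuotientAddGroup.mk b : ModM m B) = x := by
  obtain ⟨b, rfl⟩ := QuotientAddGroup.mk_surjective x
  obtain ⟨c, hc⟩ := (QuotientAddGroup.eq_zero_iff _).1 hx
  obtain ⟨b', rfl⟩ := hg c
  refine ⟨b - m • b', by rw [map_sub, map_zsmul, hc, sub_self], ?_⟩
  exact QuotientAddGroup.eq_iff_sub_mem.2 ⟨-b', by rw [smul_neg]; abel⟩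

theorem finite_ker_modMap {f : A →+ B} {g : B →+ C} (hf : Injective f) (hfg : Exact f g)
    (m : ℤ) [Finite (torsionBy m C)] : Finite (modMap m f).ker := by
  have hlift : ∀ x : (modMap m f).ker, ∃ a : A, ∃ b : B,
      (QuotientAddGroup.mk a : ModM m A) = x.1 ∧ m • b = f a := by
    rintro ⟨x, hx⟩
    obtain ⟨a, rfl⟩ := QuotientAddGroup.mk_surjective x
    obtain ⟨b, hb⟩ := (QuotientAddGroup.eq_zero_iff _).1 hx
    exact ⟨a, b, rfl, hb⟩
  choose a b ha hb using hlift
  refine Finite.of_injective (fun x => (⟨g (b x), by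
    rw [mem_torsionBy, ← map_zsmul, hb, hfg.apply_apply_eq_zero]⟩ : torsionBy m C)) ?_
  intro x y hxy
  have hgb : g (b x - b y) = 0 := by rw [map_sub, sub_eq_zero]; exact congrArg Subtype.val hxy
  obtain ⟨e, he⟩ := (hfg _).1 hgb
  have hm : a x - a y = m • e := hf (by rw [map_sub, ← hb, ← hb, map_zsmul, he, smul_sub])
  rw [Subtype.ext_iff, ← ha x, ← ha y]
  exact QuotientAddGroup.eq_iff_sub_mem.2 ⟨e, hm.symm⟩

end ModM

section LAdic

variable {ℓ : ℕ} {A B C : Type} [AddCommGroup A] [AddCommGroup B] [AddCommGroup C]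

theorem modMap_surjective {g : B →+ C} (hg : Surjective g) (m : ℤ) :
    Surjective (modMap m g) := by
  intro x
  obtain ⟨c, rfl⟩ := QuotientAddGroup.mk_surjective x
  obtain ⟨b, rfl⟩ := hg c
  exact ⟨QuotientAddGroup.mk b, modMap_mk m g b⟩

theorem LAdicMap_comp (f : A →+ B) (g : B →+ C) :
    LAdicMap ℓ (g.comp f) = (LAdicMap ℓ g).comp (LAdicMap ℓ f) :=
  AddMonoidHom.ext fun x => Subtype.ext <| funext fun n => modMap_comp _ f g (x.1 n)

theorem LAdicMap_zero : LAdicMap ℓ (0 : A →+ B) = 0 :=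
  AddMonoidHom.ext fun x => Subtype.ext <| funext fun n => by
    show modMap _ 0 (x.1 n) = 0
    exact QuotientAddGroup.induction_on (x.1 n) fun a => by simp

abbrev LAdicFiber (ℓ : ℕ) (f : A →+ B) (w : LAdic ℓ B) (n : ℕ) : Type :=
  {x : ModM ((ℓ : ℤ) ^ n) A // modMap ((ℓ : ℤ) ^ n) f x = w.1 n}

def LAdicFiber.trans (f : A →+ B) (w : LAdic ℓ B) (n : ℕ) :
    LAdicFiber ℓ f w (n + 1) → LAdicFiber ℓ f w n :=
  fun x => ⟨modTrans ℓ n A x.1, by rw [modMap_modTrans, x.2, w.2 n]⟩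

theorem exists_LAdicMap_eq_of_compatible {f : A →+ B} {w : LAdic ℓ B}
    (s : ∀ n, LAdicFiber ℓ f w n) (hs : ∀ n, LAdicFiber.trans f w n (s (n + 1)) = s n) :
    ∃ z, LAdicMap ℓ f z = w :=
  ⟨⟨fun n => (s n).1, fun n => congrArg Subtype.val (hs n)⟩,
    Subtype.ext <| funext fun n => (s n).2⟩

theorem LAdicMap_surjective {g : B →+ C} (hg : Surjective g) : Surjective (LAdicMap ℓ g) := by
  intro w
  have htrans (n : ℕ) : Surjective (LAdicFiber.trans g w n) := by
    intro x
    obtain ⟨y, hy⟩ := modMap_surjective hg _ (w.1 (n + 1))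
    obtain ⟨b, hb0, hb⟩ := exists_mk_eq_of_modMap_eq_zero hg (x := modTrans ℓ n B y - x.1)
      (by rw [map_sub, modMap_modTrans, hy, w.2 n, x.2, sub_self])
    refine ⟨⟨y - QuotientAddGroup.mk b, ?_⟩, Subtype.ext ?_⟩
    · rw [map_sub, hy, modMap_mk, hb0, QuotientAddGroup.mk_zero, sub_zero]
    · show modTrans ℓ n B (y - QuotientAddGroup.mk b) = x.1
      rw [map_sub, modTrans_mk, hb, sub_sub_cancel]
  obtain ⟨x₀, hx₀⟩ := modMap_surjective hg _ (w.1 0)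
  obtain ⟨s, hs⟩ := exists_compatible_seq_of_surjective _ htrans ⟨x₀, hx₀⟩
  exact exists_LAdicMap_eq_of_compatible s hs

theorem exists_LAdicMap_eq_of_injective {f : A →+ B} {g : B →+ C} (hf : Injective f)
    (hfg : Exact f g) (hg : Surjective g) (hfin : Finite (torsionBy ℓ C)) {w : LAdic ℓ B}
    (hw : LAdicMap ℓ g w = 0) : ∃ z, LAdicMap ℓ f z = w := by
  have (n : ℕ) : Nonempty (LAdicFiber ℓ f w n) := by
    obtain ⟨b, hb0, hb⟩ := exists_mk_eq_of_modMap_eq_zero hg (congrArg (fun v => v.1 n) hw)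
    obtain ⟨a, rfl⟩ := (hfg b).1 hb0
    exact ⟨⟨QuotientAddGroup.mk a, by rw [modMap_mk, hb]⟩⟩
  have (n : ℕ) : Finite (LAdicFiber ℓ f w n) := by
    have := finite_torsionBy_pow hfin n
    have := finite_ker_modMap hf hfg ((ℓ : ℤ) ^ n)
    exact (modMap _ f).finite_fiber _
  obtain ⟨s, hs⟩ := exists_compatible_seq_of_finite (LAdicFiber.trans f w)
  exact exists_LAdicMap_eq_of_compatible s hs

theorem LAdicMap_exact {f : A →+ B} {g : B →+ C} (hfg : Exact f g) (hg : Surjective g)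
    (hfin : Finite (torsionBy ℓ C)) : Exact (LAdicMap ℓ f) (LAdicMap ℓ g) := by
  refine AddMonoidHom.exact_of_comp_of_mem_range ?_ fun w hw => ?_
  · rw [← LAdicMap_comp, hfg.addMonoidHom_comp_eq_zero, LAdicMap_zero]
  have hrange : Exact f.range.subtype g := fun b => by rw [hfg b]; simp
  obtain ⟨z, rfl⟩ := exists_LAdicMap_eq_of_injective f.range.subtype_injective hrange hg hfin hw
  obtain ⟨z', rfl⟩ := LAdicMap_surjective f.rangeRestrict_surjective z
  refine ⟨z', ?_⟩
  rw [← AddMonoidHom.comp_apply, ← LAdicMap_comp, f.subtype_comp_rangeRestrict]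

end LAdic

theorem ladic_completion_right_exact_general
    (A1 A2 A3 : Type) [AddCommGroup A1] [AddCommGroup A2] [AddCommGroup A3]
    (f : A1 →+ A2) (g : A2 →+ A3)
    (hexact : Function.Exact ⇑f ⇑g) (hsurj : Function.Surjective ⇑g)
    (ℓ : ℕ)
    (hfin : Finite ↥(torsionBy (ℓ : ℤ) A3)) :
    Function.Exact ⇑(LAdicMap ℓ f) ⇑(LAdicMap ℓ g) ∧
      Function.Surjective ⇑(LAdicMap ℓ g) :=
  ⟨LAdicMap_exact hexact hsurj hfin, LAdicMap_surjective hsurj⟩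

/-- Let `A₁ → A₂ → A₃ → 0` be an exact sequence of abelian groups
and let `ℓ` be a prime.  If the `ℓ`-torsion subgroup of `A₃` is finite, then the
induced sequence of `ℓ`-adic completions `A₁^{(ℓ)} → A₂^{(ℓ)} → A₃^{(ℓ)} → 0` is
exact. -/
theorem ladic_completion_right_exact
    (A1 A2 A3 : Type) [AddCommGroup A1] [AddCommGroup A2] [AddCommGroup A3]
    (f : A1 →+ A2) (g : A2 →+ A3)
    (hexact : Function.Exact ⇑f ⇑g) (hsurj : Function.Surjective ⇑g)
    (ℓ : ℕ) (hℓ : ℓ.Prime)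
    (hfin : Finite ↥(torsionBy (ℓ : ℤ) A3)) :
    Function.Exact ⇑(LAdicMap ℓ f) ⇑(LAdicMap ℓ g) ∧
      Function.Surjective ⇑(LAdicMap ℓ g) :=
  ladic_completion_right_exact_general A1 A2 A3 f g hexact hsurj ℓ hfin
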